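/- Let ℓ : ℝ^d → ℝ be convex and differentiable, and use the mean-field family, so T_λ(u) = (c_1 u_1 + m_1, …, c_d u_d + m_d) with c_i = ϕ(s_i) > 0. If the coordinates u_1,…,u_d of u are independent with E[u_i] = 0 and all expectations below exist, then E[(∂_i ℓ)(T_λ(u)) · u_i] ≥ 0 for every coordinate i = 1, …, d and every parameter λ. -/

import Mathlib

open MeasureTheory ProbabilityTheory

noncomputable section

abbrev Euc (d : ℕ) := EuclideanSpace ℝ (Fin d)

/-- The parameter space `λ = (m, s)` of the mean-field location-scale family. -/
abbrev MParam (d : ℕ) := EuclideanSpace ℝ ((Fin d) ⊕ (Fin d))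

def mOfM {d : ℕ} (lam : MParam d) (i : Fin d) : ℝ := lam (Sum.inl i)
def sOfM {d : ℕ} (lam : MParam d) (i : Fin d) : ℝ := lam (Sum.inr i)

/-- The mean-field reparameterization
`T_λ(u) = (ϕ(s₁) u₁ + m₁, …, ϕ(s_d) u_d + m_d)`. -/
def TmapM {d : ℕ} (ϕ : ℝ → ℝ) (lam : MParam d) (u : Fin d → ℝ) : Euc d :=
  WithLp.toLp 2 fun i => mOfM lam i + ϕ (sOfM lam i) * u i

/-!
Write `T_λ(u) = T_λ(u⁽ⁱ⁾) + uᵢ • ϕ(sᵢ) eᵢ`, where `u⁽ⁱ⁾` is `u` with its `i`-th coordinate set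
to `0`. Along a line in direction `eᵢ` the convex `ℓ` has monotone derivative `∂ᵢℓ`, so pointwise
`∂ᵢℓ(T_λ(u)) uᵢ ≥ ∂ᵢℓ(T_λ(u⁽ⁱ⁾)) uᵢ`. Since `u⁽ⁱ⁾` only involves the coordinates other than `uᵢ`,
it is independent of `uᵢ`, so the right-hand side has expectation `E[∂ᵢℓ(T_λ(u⁽ⁱ⁾))] E[uᵢ] = 0`.
-/

open InnerProductSpace
open scoped Gradient RealInnerProductSpace

section Gradient

variable {E : Type*} [NormedAddCommGroup E] [InnerProductSpace ℝ E] [CompleteSpace E]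

theorem measurable_gradient [MeasurableSpace E] [BorelSpace E] (f : E → ℝ) :
    Measurable (∇ f) :=
  (toDual ℝ E).symm.continuous.measurable.comp (measurable_fderiv ℝ f)

theorem ConvexOn.monotone_inner_gradient_add_smul {f : E → ℝ} (hconv : ConvexOn ℝ Set.univ f)
    (hdiff : Differentiable ℝ f) (y v : E) :
    Monotone fun t : ℝ => ⟪∇ f (y + t • v), v⟫ := by
  have hderiv : ∀ t : ℝ, HasDerivAt (fun t : ℝ => f (y + t • v)) ⟪∇ f (y + t • v), v⟫ t := by
    intro t
    have hline : HasDerivAt (fun t : ℝ => y + t • v) v t := by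
      simpa using ((hasDerivAt_id t).smul_const v).const_add y
    have := (hdiff _).hasFDerivAt.comp_hasDerivAt t hline
    rw [← inner_gradient_left] at this
    exact this
  have hconv_line : ConvexOn ℝ Set.univ fun t : ℝ => f (y + t • v) := by
    have hline : (fun t : ℝ => f (y + t • v)) = f ∘ AffineMap.lineMap y (y + v) := by
      ext t
      simp [AffineMap.lineMap_apply_module', add_comm]
    simpa only [hline, Set.preimage_univ] using hconv.comp_affineMap (AffineMap.lineMap y (y + v))
  intro s t hst
  have := hconv_line.monotoneOn_deriv (fun x _ => (hderiv x).differentiableAt)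
    (Set.mem_univ s) (Set.mem_univ t) hst
  rwa [(hderiv s).deriv, (hderiv t).deriv] at this

theorem ConvexOn.inner_gradient_mul_le {f : E → ℝ} (hconv : ConvexOn ℝ Set.univ f)
    (hdiff : Differentiable ℝ f) (y v : E) (t : ℝ) :
    ⟪∇ f y, v⟫ * t ≤ ⟪∇ f (y + t • v), v⟫ * t := by
  have hmono := hconv.monotone_inner_gradient_add_smul hdiff y v
  rcases le_total 0 t with ht | ht
  · simpa using mul_le_mul_of_nonneg_right (hmono ht) ht
  · simpa using mul_le_mul_of_nonpos_right (hmono ht) ht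

end Gradient

theorem ProbabilityTheory.iIndepFun.indepFun_update {Ω ι β : Type*} [MeasurableSpace Ω]
    {μ : Measure Ω} [Fintype ι] [DecidableEq ι] [MeasurableSpace β] {X : ι → Ω → β}
    (hX : iIndepFun X μ) (hmeas : ∀ i, Measurable (X i)) (i : ι) (b : β) :
    IndepFun (fun ω => Function.update (fun j => X j ω) i b) (X i) μ := by
  let extend : (({i}ᶜ : Finset ι) → β) → ι → β :=
    fun v j => if h : j = i then b else v ⟨j, by simpa⟩
  have hextend : Measurable extend := by
    refine measurable_pi_lambda _ fun j => ?_
    by_cases h : j = i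
    · simp [extend, h]
    · simpa [extend, h] using measurable_pi_apply _
  convert (hX.indepFun_finset {i}ᶜ {i} (by simp) hmeas).comp hextend
    (measurable_pi_apply ⟨i, Finset.mem_singleton_self i⟩) using 1
  · funext ω j
    by_cases h : j = i <;> simp [extend, h]
  · rfl

theorem ConvexOn.gradient_apply_mul_le {ι : Type*} [Fintype ι] [DecidableEq ι]
    {f : EuclideanSpace ℝ ι → ℝ} (hconv : ConvexOn ℝ Set.univ f) (hdiff : Differentiable ℝ f)
    (y : EuclideanSpace ℝ ι) (i : ι) {c : ℝ} (hc : 0 < c) (t : ℝ) :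
    ∇ f y i * t ≤ ∇ f (y + t • EuclideanSpace.single i c) i * t := by
  have h := hconv.inner_gradient_mul_le hdiff y (EuclideanSpace.single i c) t
  simp only [EuclideanSpace.inner_single_right, conj_trivial, mul_assoc] at h
  exact le_of_mul_le_mul_left h hc

section MeanField

variable {d : ℕ} (ϕ : ℝ → ℝ) (lam : MParam d)

theorem continuous_tmapM : Continuous (TmapM ϕ lam) :=
  (PiLp.continuous_toLp 2 _).comp <| continuous_pi fun i =>
    continuous_const.add (continuous_const.mul (continuous_apply i))

theorem tmapM_eq_update_add_single (u : Fin d → ℝ) (i : Fin d) :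
    TmapM ϕ lam u = TmapM ϕ lam (Function.update u i 0) +
      u i • EuclideanSpace.single i (ϕ (sOfM lam i)) := by
  ext j
  by_cases h : j = i
  · subst h
    simp [TmapM, mul_comm]
  · simp [TmapM, h]

end MeanField

theorem meanfield_gradient_covariance_nonneg_general
    {d : ℕ} {Ω : Type*} [MeasurableSpace Ω] (μ : Measure Ω)
    (u : Ω → Fin d → ℝ)
    (hmeas : ∀ i, Measurable fun ω => u ω i)
    (hindep : iIndepFun (fun i ω => u ω i) μ)
    (hmean : ∀ i, ∫ ω, u ω i ∂μ = 0)
    (ϕ : ℝ → ℝ) (hϕpos : ∀ x, 0 < ϕ x)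
    (ℓ : Euc d → ℝ) (hconv : ConvexOn ℝ Set.univ ℓ) (hdiff : Differentiable ℝ ℓ)
    (hint : ∀ (i : Fin d) (lam : MParam d),
      Integrable (fun ω => gradient ℓ (TmapM ϕ lam (u ω)) i * u ω i) μ)
    (hint' : ∀ (i : Fin d) (lam : MParam d),
      Integrable
        (fun ω => gradient ℓ (TmapM ϕ lam (Function.update (u ω) i 0)) i * u ω i) μ) :
    ∀ (i : Fin d) (lam : MParam d),
      0 ≤ ∫ ω, gradient ℓ (TmapM ϕ lam (u ω)) i * u ω i ∂μ := by
  intro i lam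
  have hgrad : Measurable fun x : Fin d → ℝ => ∇ ℓ (TmapM ϕ lam x) i :=
    ((EuclideanSpace.proj i).continuous.measurable.comp (measurable_gradient ℓ)).comp
      (continuous_tmapM ϕ lam).measurable
  have hindep_update : IndepFun (fun ω => ∇ ℓ (TmapM ϕ lam (Function.update (u ω) i 0)) i)
      (fun ω => u ω i) μ :=
    (hindep.indepFun_update hmeas i 0).comp hgrad measurable_id
  have hcentered : ∫ ω, ∇ ℓ (TmapM ϕ lam (Function.update (u ω) i 0)) i * u ω i ∂μ = 0 := by
    rw [hindep_update.integral_fun_mul_eq_mul_integral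
      (hgrad.comp (measurable_update_left.comp (measurable_pi_lambda _ hmeas))).aestronglyMeasurable
      (hmeas i).aestronglyMeasurable, hmean i, mul_zero]
  have hpointwise : ∀ ω, ∇ ℓ (TmapM ϕ lam (Function.update (u ω) i 0)) i * u ω i ≤
      ∇ ℓ (TmapM ϕ lam (u ω)) i * u ω i := fun ω => by
    rw [tmapM_eq_update_add_single ϕ lam (u ω) i]
    exact hconv.gradient_apply_mul_le hdiff _ i (hϕpos _) _
  rw [← hcentered]
  exact integral_mono (hint' i lam) (hint i lam) hpointwise

/-- For a convex differentiable `ℓ : ℝ^d → ℝ` and the mean-field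
family with positive diagonal conditioner `ϕ`, if the coordinates of `u` are
independent with mean zero (and the relevant expectations exist), then
`E[(∂ᵢℓ)(T_λ(u)) · uᵢ] ≥ 0` for every coordinate `i` and every parameter `λ`. -/
theorem meanfield_gradient_covariance_nonneg
    {d : ℕ} {Ω : Type*} [MeasurableSpace Ω] (μ : Measure Ω) [IsProbabilityMeasure μ]
    (u : Ω → Fin d → ℝ)
    (hmeas : ∀ i, Measurable fun ω => u ω i)
    (hindep : iIndepFun (fun i ω => u ω i) μ)
    (hmean : ∀ i, ∫ ω, u ω i ∂μ = 0)
    (hint1 : ∀ i, Integrable (fun ω => u ω i) μ)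
    (ϕ : ℝ → ℝ) (hϕpos : ∀ x, 0 < ϕ x)
    (ℓ : Euc d → ℝ) (hconv : ConvexOn ℝ Set.univ ℓ) (hdiff : Differentiable ℝ ℓ)
    (hint : ∀ (i : Fin d) (lam : MParam d),
      Integrable (fun ω => gradient ℓ (TmapM ϕ lam (u ω)) i * u ω i) μ)
    (hint' : ∀ (i : Fin d) (lam : MParam d),
      Integrable
        (fun ω => gradient ℓ (TmapM ϕ lam (Function.update (u ω) i 0)) i * u ω i) μ) :
    ∀ (i : Fin d) (lam : MParam d),
      0 ≤ ∫ ω, gradient ℓ (TmapM ϕ lam (u ω)) i * u ω i ∂μ :=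
  meanfield_gradient_covariance_nonneg_general μ u hmeas hindep hmean ϕ hϕpos ℓ hconv hdiff hint
    hint'

end
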